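/- Let α₁, α₂ ∈ ℝ. Then ∫_ℝ ((1 − α₁ z)² + 1)² ((1 − α₂ z)² + 1)² φ(z) dz = 32α₁α₂(2 + 3α₂²) + 48α₁³α₂(2 + 5α₂²) + 4(4 + 8α₂² + 3α₂⁴) + 8α₁²(4 + 24α₂² + 15α₂⁴) + 3α₁⁴(4 + 40α₂² + 35α₂⁴). Consequently the two-parameter Balakrishnan alpha skew normal density f(z; α₁, α₂) = ((1 − α₁z)² + 1)² ((1 − α₂z)² + 1)² φ(z) / C(α₁, α₂), with C(α₁, α₂) equal to this expression, is a probability density on ℝ. -/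

import Mathlib

open MeasureTheory Real Filter Topology

noncomputable def phi (z : ℝ) : ℝ := (Real.sqrt (2 * Real.pi))⁻¹ * Real.exp (-z ^ 2 / 2)

lemma phi_nonneg (z : ℝ) : 0 ≤ phi z := by
  unfold phi; positivity

lemma integrable_pow_gauss (n : ℕ) :
    Integrable fun x : ℝ => x ^ n * Real.exp (-x ^ 2 / 2) := by
  have h := integrable_rpow_mul_exp_neg_mul_sq (b := 1/2) (by norm_num)
    (s := (n : ℝ)) (lt_of_lt_of_le neg_one_lt_zero (Nat.cast_nonneg n))
  apply h.congr
  filter_upwards with x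
  rw [Real.rpow_natCast]
  congr 1
  ring

lemma integrable_pow_phi (n : ℕ) : Integrable fun x : ℝ => x ^ n * phi x := by
  have h := (integrable_pow_gauss n).const_mul (Real.sqrt (2 * Real.pi))⁻¹
  apply h.congr
  filter_upwards with x
  unfold phi
  ring

lemma tendsto_pow_gauss_atTop (k : ℕ) :
    Tendsto (fun x : ℝ => x ^ k * Real.exp (-x ^ 2 / 2)) atTop (𝓝 0) := by
  have h := rpow_mul_exp_neg_mul_sq_isLittleO_exp_neg (b := 1/2) (by norm_num) (k : ℝ)
  have hc : Tendsto (fun x : ℝ => Real.exp (-(1/2) * x)) atTop (𝓝 0) := by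
    have := Real.tendsto_exp_neg_atTop_nhds_zero.comp
      (tendsto_id.const_mul_atTop (show (0:ℝ) < 1/2 by norm_num))
    apply this.congr
    intro x
    simp only [Function.comp, id]
    ring_nf
  have h2 := h.trans_tendsto hc
  apply h2.congr
  intro x
  rw [Real.rpow_natCast]
  congr 1
  ring

lemma tendsto_pow_gauss_atBot (k : ℕ) :
    Tendsto (fun x : ℝ => x ^ k * Real.exp (-x ^ 2 / 2)) atBot (𝓝 0) := by
  have h := (tendsto_pow_gauss_atTop k).comp tendsto_neg_atBot_atTop
  have h2 := h.const_mul ((-1 : ℝ) ^ k)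
  rw [mul_zero] at h2
  apply h2.congr
  intro x
  simp only [Function.comp]
  rw [neg_pow, neg_sq]
  ring_nf
  rw [mul_comm k 2, pow_mul]
  norm_num

lemma hasDerivAt_gauss (x : ℝ) :
    HasDerivAt (fun x : ℝ => Real.exp (-x ^ 2 / 2)) (Real.exp (-x ^ 2 / 2) * (-x)) x := by
  have h1 : HasDerivAt (fun x : ℝ => -x ^ 2 / 2) (-x) x := by
    have := ((hasDerivAt_pow 2 x).neg.div_const 2)
    refine this.congr_deriv ?_
    simp; ring
  simpa [Function.comp_def] using (Real.hasDerivAt_exp (-x ^ 2 / 2)).comp x h1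

lemma gauss_rec (n : ℕ) :
    ∫ x : ℝ, x ^ (n + 2) * Real.exp (-x ^ 2 / 2) =
      (n + 1 : ℝ) * ∫ x : ℝ, x ^ n * Real.exp (-x ^ 2 / 2) := by
  have hderiv : ∀ x : ℝ, HasDerivAt (fun x : ℝ => x ^ (n + 1) * Real.exp (-x ^ 2 / 2))
      ((n + 1 : ℝ) * x ^ n * Real.exp (-x ^ 2 / 2) - x ^ (n + 2) * Real.exp (-x ^ 2 / 2)) x := by
    intro x
    have := (hasDerivAt_pow (n + 1) x).mul (hasDerivAt_gauss x)
    refine this.congr_deriv ?_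
    push_cast
    ring
  have hint : Integrable (fun x : ℝ =>
      (n + 1 : ℝ) * x ^ n * Real.exp (-x ^ 2 / 2) - x ^ (n + 2) * Real.exp (-x ^ 2 / 2)) := by
    have h1 := ((integrable_pow_gauss n).const_mul (n + 1 : ℝ)).sub (integrable_pow_gauss (n + 2))
    apply h1.congr
    filter_upwards with x
    simp only [Pi.sub_apply]
    push_cast
    ring
  have h0 := integral_of_hasDerivAt_of_tendsto hderiv hint
    (tendsto_pow_gauss_atBot (n + 1)) (tendsto_pow_gauss_atTop (n + 1))
  rw [sub_zero] at h0
  have h2 : ∫ x : ℝ, ((n + 1 : ℝ) * x ^ n * Real.exp (-x ^ 2 / 2) -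
      x ^ (n + 2) * Real.exp (-x ^ 2 / 2)) =
      (n + 1 : ℝ) * (∫ x : ℝ, x ^ n * Real.exp (-x ^ 2 / 2)) -
        ∫ x : ℝ, x ^ (n + 2) * Real.exp (-x ^ 2 / 2) := by
    rw [integral_sub (((integrable_pow_gauss n).const_mul ((n:ℝ)+1)).congr
        (by filter_upwards with x; ring))
      (integrable_pow_gauss (n + 2)), ← integral_const_mul]
    congr 1
    congr 1
    funext x
    ring
  rw [h2] at h0
  linarith

lemma gauss0 : ∫ x : ℝ, Real.exp (-x ^ 2 / 2) = Real.sqrt (2 * Real.pi) := by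
  have h := integral_gaussian (1/2)
  rw [show Real.pi / (1/2) = 2 * Real.pi by ring] at h
  rw [← h]
  congr 1
  funext x
  congr 1
  ring

lemma gauss1 : ∫ x : ℝ, x ^ 1 * Real.exp (-x ^ 2 / 2) = 0 := by
  have hderiv : ∀ x : ℝ, HasDerivAt (fun x : ℝ => -Real.exp (-x ^ 2 / 2))
      (x ^ 1 * Real.exp (-x ^ 2 / 2)) x := by
    intro x
    have := (hasDerivAt_gauss x).neg
    refine this.congr_deriv ?_
    ring
  have htop : Tendsto (fun x : ℝ => -Real.exp (-x ^ 2 / 2)) atTop (𝓝 0) := by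
    have := (tendsto_pow_gauss_atTop 0).neg
    rw [neg_zero] at this
    apply this.congr
    intro x; simp
  have hbot : Tendsto (fun x : ℝ => -Real.exp (-x ^ 2 / 2)) atBot (𝓝 0) := by
    have := (tendsto_pow_gauss_atBot 0).neg
    rw [neg_zero] at this
    apply this.congr
    intro x; simp
  have h0 := integral_of_hasDerivAt_of_tendsto hderiv (integrable_pow_gauss 1) hbot htop
  rw [sub_zero] at h0
  exact h0

noncomputable def gm (n : ℕ) : ℝ := ∫ x : ℝ, x ^ n * Real.exp (-x ^ 2 / 2)

lemma gm_rec (n : ℕ) : gm (n + 2) = (n + 1 : ℝ) * gm n := gauss_rec n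

lemma gm_even : gm 0 = Real.sqrt (2 * Real.pi) ∧ gm 2 = Real.sqrt (2 * Real.pi) ∧
    gm 4 = 3 * Real.sqrt (2 * Real.pi) ∧ gm 6 = 15 * Real.sqrt (2 * Real.pi) ∧
    gm 8 = 105 * Real.sqrt (2 * Real.pi) := by
  have h0 : gm 0 = Real.sqrt (2 * Real.pi) := by
    unfold gm; simpa using gauss0
  have h2 : gm 2 = Real.sqrt (2 * Real.pi) := by
    rw [show (2:ℕ) = 0 + 2 from rfl, gm_rec 0, h0]; norm_num
  have h4 : gm 4 = 3 * Real.sqrt (2 * Real.pi) := by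
    rw [show (4:ℕ) = 2 + 2 from rfl, gm_rec 2, h2]; norm_num
  have h6 : gm 6 = 15 * Real.sqrt (2 * Real.pi) := by
    rw [show (6:ℕ) = 4 + 2 from rfl, gm_rec 4, h4]; norm_num; ring
  have h8 : gm 8 = 105 * Real.sqrt (2 * Real.pi) := by
    rw [show (8:ℕ) = 6 + 2 from rfl, gm_rec 6, h6]; norm_num; ring
  exact ⟨h0, h2, h4, h6, h8⟩

lemma gm_odd : gm 1 = 0 ∧ gm 3 = 0 ∧ gm 5 = 0 ∧ gm 7 = 0 := by
  have h1 : gm 1 = 0 := gauss1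
  have h3 : gm 3 = 0 := by
    rw [show (3:ℕ) = 1 + 2 from rfl, gm_rec 1, h1]; ring
  have h5 : gm 5 = 0 := by
    rw [show (5:ℕ) = 3 + 2 from rfl, gm_rec 3, h3]; ring
  have h7 : gm 7 = 0 := by
    rw [show (7:ℕ) = 5 + 2 from rfl, gm_rec 5, h5]; ring
  exact ⟨h1, h3, h5, h7⟩

noncomputable def pm (n : ℕ) : ℝ := ∫ x : ℝ, x ^ n * phi x

lemma pm_eq (n : ℕ) : pm n = (Real.sqrt (2 * Real.pi))⁻¹ * gm n := by
  unfold pm gm phi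
  rw [← integral_const_mul]
  congr 1
  funext x
  ring

lemma sqrt_two_pi_pos : (0:ℝ) < Real.sqrt (2 * Real.pi) := by
  positivity

lemma pm_vals : pm 0 = 1 ∧ pm 1 = 0 ∧ pm 2 = 1 ∧ pm 3 = 0 ∧ pm 4 = 3 ∧ pm 5 = 0 ∧
    pm 6 = 15 ∧ pm 7 = 0 ∧ pm 8 = 105 := by
  obtain ⟨h0, h2, h4, h6, h8⟩ := gm_even
  obtain ⟨h1, h3, h5, h7⟩ := gm_odd
  have hs := sqrt_two_pi_pos.ne'
  refine ⟨?_, ?_, ?_, ?_, ?_, ?_, ?_, ?_, ?_⟩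
  · rw [pm_eq, h0, inv_mul_cancel₀ hs]
  · rw [pm_eq, h1, mul_zero]
  · rw [pm_eq, h2, inv_mul_cancel₀ hs]
  · rw [pm_eq, h3, mul_zero]
  · rw [pm_eq, h4, mul_comm (3:ℝ), ← mul_assoc, inv_mul_cancel₀ hs, one_mul]
  · rw [pm_eq, h5, mul_zero]
  · rw [pm_eq, h6, mul_comm (15:ℝ), ← mul_assoc, inv_mul_cancel₀ hs, one_mul]
  · rw [pm_eq, h7, mul_zero]
  · rw [pm_eq, h8, mul_comm (105:ℝ), ← mul_assoc, inv_mul_cancel₀ hs, one_mul]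

noncomputable def tpC (a b : ℝ) : ℕ → ℝ
  | 0 => 16
  | 1 => -32 * b - 32 * a
  | 2 => 32 * b ^ 2 + 64 * a * b + 32 * a ^ 2
  | 3 => -16 * b ^ 3 - 64 * a * b ^ 2 - 64 * a ^ 2 * b - 16 * a ^ 3
  | 4 => 4 * b ^ 4 + 32 * a * b ^ 3 + 64 * a ^ 2 * b ^ 2 + 32 * a ^ 3 * b + 4 * a ^ 4
  | 5 => -8 * a * b ^ 4 - 32 * a ^ 2 * b ^ 3 - 32 * a ^ 3 * b ^ 2 - 8 * a ^ 4 * b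
  | 6 => 8 * a ^ 2 * b ^ 4 + 16 * a ^ 3 * b ^ 3 + 8 * a ^ 4 * b ^ 2
  | 7 => -4 * a ^ 3 * b ^ 4 - 4 * a ^ 4 * b ^ 3
  | 8 => a ^ 4 * b ^ 4
  | _ => 0

lemma tp_expand (a b z : ℝ) :
    ((1 - a * z) ^ 2 + 1) ^ 2 * ((1 - b * z) ^ 2 + 1) ^ 2 * phi z =
      ∑ i ∈ Finset.range 9, tpC a b i * (z ^ i * phi z) := by
  simp only [Finset.sum_range_succ, Finset.sum_range_zero, tpC]
  ring

lemma tp_integral (a b : ℝ) :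
    (∫ z : ℝ, ((1 - a * z) ^ 2 + 1) ^ 2 * ((1 - b * z) ^ 2 + 1) ^ 2 * phi z) =
      ∑ i ∈ Finset.range 9, tpC a b i * pm i := by
  rw [show (fun z : ℝ => ((1 - a * z) ^ 2 + 1) ^ 2 * ((1 - b * z) ^ 2 + 1) ^ 2 * phi z) =
      fun z : ℝ => ∑ i ∈ Finset.range 9, tpC a b i * (z ^ i * phi z) from
    funext fun z => tp_expand a b z]
  rw [integral_finset_sum _ fun i _ => (integrable_pow_phi i).const_mul _]
  exact Finset.sum_congr rfl fun i _ => integral_const_mul _ _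

lemma tp_integrable (a b : ℝ) :
    Integrable fun z : ℝ => ((1 - a * z) ^ 2 + 1) ^ 2 * ((1 - b * z) ^ 2 + 1) ^ 2 * phi z := by
  rw [show (fun z : ℝ => ((1 - a * z) ^ 2 + 1) ^ 2 * ((1 - b * z) ^ 2 + 1) ^ 2 * phi z) =
      fun z : ℝ => ∑ i ∈ Finset.range 9, tpC a b i * (z ^ i * phi z) from
    funext fun z => tp_expand a b z]
  exact integrable_finset_sum _ fun i _ => (integrable_pow_phi i).const_mul _

theorem tpbasn2_normalizing_constant (α₁ α₂ : ℝ) :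
    (∫ z : ℝ, ((1 - α₁ * z) ^ 2 + 1) ^ 2 * ((1 - α₂ * z) ^ 2 + 1) ^ 2 * phi z) =
      32 * α₁ * α₂ * (2 + 3 * α₂ ^ 2) + 48 * α₁ ^ 3 * α₂ * (2 + 5 * α₂ ^ 2) +
        4 * (4 + 8 * α₂ ^ 2 + 3 * α₂ ^ 4) + 8 * α₁ ^ 2 * (4 + 24 * α₂ ^ 2 + 15 * α₂ ^ 4) +
        3 * α₁ ^ 4 * (4 + 40 * α₂ ^ 2 + 35 * α₂ ^ 4) ∧
    (∀ z : ℝ,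
      0 ≤ ((1 - α₁ * z) ^ 2 + 1) ^ 2 * ((1 - α₂ * z) ^ 2 + 1) ^ 2 * phi z /
        (32 * α₁ * α₂ * (2 + 3 * α₂ ^ 2) + 48 * α₁ ^ 3 * α₂ * (2 + 5 * α₂ ^ 2) +
          4 * (4 + 8 * α₂ ^ 2 + 3 * α₂ ^ 4) + 8 * α₁ ^ 2 * (4 + 24 * α₂ ^ 2 + 15 * α₂ ^ 4) +
          3 * α₁ ^ 4 * (4 + 40 * α₂ ^ 2 + 35 * α₂ ^ 4))) ∧
    (∫ z : ℝ, ((1 - α₁ * z) ^ 2 + 1) ^ 2 * ((1 - α₂ * z) ^ 2 + 1) ^ 2 * phi z /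
        (32 * α₁ * α₂ * (2 + 3 * α₂ ^ 2) + 48 * α₁ ^ 3 * α₂ * (2 + 5 * α₂ ^ 2) +
          4 * (4 + 8 * α₂ ^ 2 + 3 * α₂ ^ 4) + 8 * α₁ ^ 2 * (4 + 24 * α₂ ^ 2 + 15 * α₂ ^ 4) +
          3 * α₁ ^ 4 * (4 + 40 * α₂ ^ 2 + 35 * α₂ ^ 4))) = 1 := by
  obtain ⟨p0, p1, p2, p3, p4, p5, p6, p7, p8⟩ := pm_vals
  have hmain : (∫ z : ℝ, ((1 - α₁ * z) ^ 2 + 1) ^ 2 * ((1 - α₂ * z) ^ 2 + 1) ^ 2 * phi z) =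
      32 * α₁ * α₂ * (2 + 3 * α₂ ^ 2) + 48 * α₁ ^ 3 * α₂ * (2 + 5 * α₂ ^ 2) +
        4 * (4 + 8 * α₂ ^ 2 + 3 * α₂ ^ 4) + 8 * α₁ ^ 2 * (4 + 24 * α₂ ^ 2 + 15 * α₂ ^ 4) +
        3 * α₁ ^ 4 * (4 + 40 * α₂ ^ 2 + 35 * α₂ ^ 4) := by
    rw [tp_integral α₁ α₂]
    simp only [Finset.sum_range_succ, Finset.sum_range_zero, tpC,
      p0, p1, p2, p3, p4, p5, p6, p7, p8]
    ring
  -- positivity of the constant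
  have hone : (∫ z : ℝ, phi z) = 1 := by
    have := p0
    unfold pm at this
    simpa using this
  have hle : (∫ z : ℝ, phi z) ≤
      ∫ z : ℝ, ((1 - α₁ * z) ^ 2 + 1) ^ 2 * ((1 - α₂ * z) ^ 2 + 1) ^ 2 * phi z := by
    refine integral_mono ?_ (tp_integrable α₁ α₂) fun z => ?_
    · have := integrable_pow_phi 0
      apply this.congr
      filter_upwards with x
      simp
    · have hp := phi_nonneg z
      have h1 : (1 : ℝ) ≤ ((1 - α₁ * z) ^ 2 + 1) ^ 2 := by nlinarith [sq_nonneg (1 - α₁ * z)]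
      have h2 : (1 : ℝ) ≤ ((1 - α₂ * z) ^ 2 + 1) ^ 2 := by nlinarith [sq_nonneg (1 - α₂ * z)]
      nlinarith [mul_le_mul h1 h2 zero_le_one (le_trans zero_le_one h1)]
  have hCpos : (0 : ℝ) <
      32 * α₁ * α₂ * (2 + 3 * α₂ ^ 2) + 48 * α₁ ^ 3 * α₂ * (2 + 5 * α₂ ^ 2) +
        4 * (4 + 8 * α₂ ^ 2 + 3 * α₂ ^ 4) + 8 * α₁ ^ 2 * (4 + 24 * α₂ ^ 2 + 15 * α₂ ^ 4) +
        3 * α₁ ^ 4 * (4 + 40 * α₂ ^ 2 + 35 * α₂ ^ 4) := by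
    rw [← hmain]
    calc (0:ℝ) < 1 := one_pos
    _ = ∫ z : ℝ, phi z := hone.symm
    _ ≤ _ := hle
  refine ⟨hmain, fun z => ?_, ?_⟩
  · refine div_nonneg ?_ hCpos.le
    exact mul_nonneg (mul_nonneg (by positivity) (by positivity)) (phi_nonneg z)
  · rw [integral_div, hmain, div_self hCpos.ne']
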